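/- Let h > 0 and ε > 0 be real numbers, x₀ ∈ ℝ, x₁ = x₀ + h, x₂ = x₀ + 2h, and u₀, u₁, u₂ ∈ ℝ. Suppose λ₀, λ₁, λ₂ ∈ ℝ are such that the IMQ interpolant r(x) = λ₀/√(1+ε²(x−x₀)²) + λ₁/√(1+ε²(x−x₁)²) + λ₂/√(1+ε²(x−x₂)²) satisfies r(x_k) = u_k for k = 0, 1, 2. Then the derivative of r at the middle node satisfies r′(x₁) = ((1+4ε²h² + √(1+4ε²h²))/(4h·(1+ε²h²)^{3/2}))·(u₂ − u₀). -/

import Mathlib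

/-!
At the middle node the kernel φ₁ is stationary and φ₀, φ₂ have opposite slopes,
so r'(x₁) = ε²h(λ₂ - λ₀)/(1 + ε²h²)^{3/2}. By the symmetry of the node set,
u₂ - u₀ = (λ₂ - λ₀)(1 - 1/s) with s = √(1 + 4ε²h²), and (s² + s)(1 - 1/s) = s² - 1 = 4ε²h²
turns the ratio of the two into the stated weight.
-/

open Real

lemma hasDerivAt_div_sqrt_one_add_sq (l ε c x : ℝ) :
    HasDerivAt (fun x => l / √(1 + ε^2*(x - c)^2))
      (-(l * ε^2 * (x - c)) / √(1 + ε^2*(x - c)^2) ^ 3) x := by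
  have hpos : 0 < 1 + ε^2*(x - c)^2 := by positivity
  have hs : √(1 + ε^2*(x - c)^2) ≠ 0 := (sqrt_pos.2 hpos).ne'
  have hq : HasDerivAt (fun x => 1 + ε^2*(x - c)^2) (2 * ε^2 * (x - c)) x :=
    ((((hasDerivAt_id x).sub_const c).fun_pow 2).const_mul (ε^2) |>.const_add 1).congr_deriv
      (by simp; ring)
  refine ((hasDerivAt_const x l).fun_div (hq.sqrt hpos.ne') hs).congr_deriv ?_
  field_simp
  ring

lemma add_sqrt_mul_one_sub_one_div_sqrt {t : ℝ} (ht : 0 < t) :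
    (t + √t) * (1 - 1 / √t) = t - 1 := by
  have hs : √t ≠ 0 := (sqrt_pos.2 ht).ne'
  field_simp
  linear_combination sq_sqrt ht.le

noncomputable def imqInterp (ε x₀ h l₀ l₁ l₂ x : ℝ) : ℝ :=
  l₀ / √(1 + ε^2*(x - x₀)^2) + l₁ / √(1 + ε^2*(x - (x₀ + h))^2)
    + l₂ / √(1 + ε^2*(x - (x₀ + 2*h))^2)

lemma hasDerivAt_imqInterp_middle (ε x₀ h l₀ l₁ l₂ : ℝ) :
    HasDerivAt (imqInterp ε x₀ h l₀ l₁ l₂) (ε^2 * h * (l₂ - l₀) / √(1 + ε^2*h^2) ^ 3)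
      (x₀ + h) := by
  refine (((hasDerivAt_div_sqrt_one_add_sq l₀ ε x₀ (x₀ + h)).fun_add
    (hasDerivAt_div_sqrt_one_add_sq l₁ ε (x₀ + h) (x₀ + h))).fun_add
    (hasDerivAt_div_sqrt_one_add_sq l₂ ε (x₀ + 2*h) (x₀ + h))).congr_deriv ?_
  have hd : x₀ + h - (x₀ + 2*h) = -h := by ring
  simp only [add_sub_cancel_left, sub_self, hd, neg_sq]
  ring

lemma imqInterp_right_sub_left (ε x₀ h l₀ l₁ l₂ : ℝ) :
    imqInterp ε x₀ h l₀ l₁ l₂ (x₀ + 2*h) - imqInterp ε x₀ h l₀ l₁ l₂ x₀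
      = (l₂ - l₀) * (1 - 1 / √(1 + 4*ε^2*h^2)) := by
  simp only [imqInterp]
  ring_nf
  simp only [sqrt_one, inv_one, mul_one]
  ring

theorem imq_three_point_deriv_middle_general
    (h ε x₀ u₀ u₂ : ℝ) (hh : 0 < h)
    (x₁ x₂ : ℝ) (hx₁ : x₁ = x₀ + h) (hx₂ : x₂ = x₀ + 2*h)
    (l₀ l₁ l₂ : ℝ) (r : ℝ → ℝ)
    (hr : r = fun x => l₀ / Real.sqrt (1 + ε^2*(x - x₀)^2)
      + l₁ / Real.sqrt (1 + ε^2*(x - x₁)^2)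
      + l₂ / Real.sqrt (1 + ε^2*(x - x₂)^2))
    (h0 : r x₀ = u₀) (h2 : r x₂ = u₂) :
    deriv r x₁ =
      ((1 + 4*ε^2*h^2 + Real.sqrt (1 + 4*ε^2*h^2))
        / (4*h*(1 + ε^2*h^2) ^ ((3:ℝ)/2))) * (u₂ - u₀) := by
  subst hx₁ hx₂
  obtain rfl : r = imqInterp ε x₀ h l₀ l₁ l₂ := hr
  have hA : √(1 + ε^2*h^2) ≠ 0 := (sqrt_pos.2 (by positivity)).ne'
  rw [(hasDerivAt_imqInterp_middle ε x₀ h l₀ l₁ l₂).deriv, ← h0, ← h2,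
    imqInterp_right_sub_left, rpow_div_two_eq_sqrt _ (by positivity), rpow_ofNat]
  calc ε^2 * h * (l₂ - l₀) / √(1 + ε^2*h^2) ^ 3
      = (1 + 4*ε^2*h^2 - 1) * (l₂ - l₀) / (4*h*√(1 + ε^2*h^2) ^ 3) := by
        field_simp
        ring
    _ = _ := by
        rw [← add_sqrt_mul_one_sub_one_div_sqrt (by positivity)]
        ring

/-- Derivative of the three-node IMQ interpolant at the middle node. -/
theorem imq_three_point_deriv_middle
    (h ε x₀ u₀ u₁ u₂ : ℝ) (hh : 0 < h) (hε : 0 < ε)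
    (x₁ x₂ : ℝ) (hx₁ : x₁ = x₀ + h) (hx₂ : x₂ = x₀ + 2*h)
    (l₀ l₁ l₂ : ℝ) (r : ℝ → ℝ)
    (hr : r = fun x => l₀ / Real.sqrt (1 + ε^2*(x - x₀)^2)
      + l₁ / Real.sqrt (1 + ε^2*(x - x₁)^2)
      + l₂ / Real.sqrt (1 + ε^2*(x - x₂)^2))
    (h0 : r x₀ = u₀) (h1 : r x₁ = u₁) (h2 : r x₂ = u₂) :
    deriv r x₁ =
      ((1 + 4*ε^2*h^2 + Real.sqrt (1 + 4*ε^2*h^2))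
        / (4*h*(1 + ε^2*h^2) ^ ((3:ℝ)/2))) * (u₂ - u₀) :=
  imq_three_point_deriv_middle_general h ε x₀ u₀ u₂ hh x₁ x₂ hx₁ hx₂ l₀ l₁ l₂ r hr h0 h2
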